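/- Let φ : ℝ[z] → ℝ be any linear functional such that φ(p) = 0 for every polynomial p satisfying p(z) + p(-1-z) = 0, and φ(q) = -2 · q(0) for every even polynomial q (one with q(-z) = q(z)). Then φ = θ; that is, θ is the unique linear functional on ℝ[z] with these two properties. -/

import Mathlib

open PowerSeries Finset
section
open Nat

lemma key_ps : rescale (2:ℚ) (bernoulliPowerSeries ℚ) * (exp ℚ + 1) = 2 * bernoulliPowerSeries ℚ := by
  have hreg : (exp ℚ - 1) ≠ 0 := by
    intro h
    have := congrArg (PowerSeries.coeff 1) h
    simp [coeff_exp] at this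
  apply mul_right_cancel₀ hreg
  have e2 := exp_pow_eq_rescale_exp (A := ℚ) 2
  push_cast at e2
  have e1 : (exp ℚ + 1) * (exp ℚ - 1) = rescale (2:ℚ) (exp ℚ - 1) := by
    rw [map_sub, map_one, ← e2]; ring
  rw [mul_assoc, e1, ← map_mul, bernoulliPowerSeries_mul_exp_sub_one, mul_assoc,
    bernoulliPowerSeries_mul_exp_sub_one, rescale_X]
  rw [map_ofNat (C (R := ℚ)) 2]

lemma sum_two_pow_mul_bernoulli (n : ℕ) :
    ∑ k ∈ range (n + 1), (n.choose k : ℚ) * 2 ^ k * bernoulli k = (2 - 2 ^ n) * bernoulli n := by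
  have hfac : ∀ m : ℕ, (m ! : ℚ) ≠ 0 := fun m => Nat.cast_ne_zero.mpr m.factorial_ne_zero
  have H := congrArg (PowerSeries.coeff n) key_ps
  rw [PowerSeries.coeff_mul, Nat.sum_antidiagonal_eq_sum_range_succ_mk, sum_range_succ,
    show (2 : PowerSeries ℚ) = PowerSeries.C 2 from (map_ofNat (PowerSeries.C (R := ℚ)) 2).symm,
    PowerSeries.coeff_C_mul] at H
  simp only [coeff_rescale, coeff_exp, bernoulliPowerSeries, coeff_mk, map_add, map_one,
    PowerSeries.coeff_one, tsub_self, Algebra.algebraMap_self, RingHom.id_apply, factorial_zero,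
    cast_one, if_true] at H
  have key : ∀ x ∈ range n, (n.choose x : ℚ) * 2 ^ x * bernoulli x
      = n ! * (2 ^ x * (bernoulli x / x !) * ((1 / ((n - x)! : ℚ)) + if n - x = 0 then (1:ℚ) else 0)) := by
    intro x hx
    rw [mem_range] at hx
    rw [if_neg (Nat.sub_ne_zero_of_lt hx), Nat.cast_choose ℚ hx.le]
    field_simp
    ring
  rw [sum_range_succ, Finset.sum_congr rfl key, ← Finset.mul_sum]
  have H2 : ∑ x ∈ range n, 2 ^ x * (bernoulli x / x !) * ((1 / ((n - x)! : ℚ)) + if n - x = 0 then (1:ℚ) else 0)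
      = 2 * (bernoulli n / n !) - 2 ^ n * (bernoulli n / n !) * (1 / 1 + 1) := by
    linarith [H]
  rw [H2, choose_self, cast_one, one_mul]
  field_simp
  ring

/-- The coefficient sequence of θ, in ℚ. -/
noncomputable def cQ (k : ℕ) : ℚ := 4 * (2 ^ (k + 1) - 1) * bernoulli (k + 1) / (k + 1)

lemma cQ_even_ne_zero {n : ℕ} (hn : Even n) (h0 : n ≠ 0) : cQ n = 0 := by
  have : bernoulli (n + 1) = 0 := by
    rw [bernoulli_eq_bernoulli'_of_ne_one (by omega)]
    exact bernoulli'_eq_zero_of_odd (Even.add_one hn) (by omega)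
  simp [cQ, this]

lemma mul_sum_cQ (n : ℕ) : ((n : ℚ) + 1) * ∑ k ∈ range (n + 1), (n.choose k : ℚ) * cQ k
    = 4 * ((1 - 2 ^ (n + 1)) * bernoulli (n + 1)) - 4 * (if n = 0 then 1 else 0) := by
  rw [Finset.mul_sum]
  have e1 : ∀ k ∈ range (n + 1), ((n : ℚ) + 1) * ((n.choose k : ℚ) * cQ k)
      = (((n + 1).choose (k + 1) : ℚ)) * ((2 ^ (k + 1) - 1) * bernoulli (k + 1)) * 4 := by
    intro k hk
    have hc : ((n + 1) : ℕ) * n.choose k = (n + 1).choose (k + 1) * (k + 1) :=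
      Nat.add_one_mul_choose_eq n k
    have hcq : ((n : ℚ) + 1) * (n.choose k : ℚ) = ((n + 1).choose (k + 1) : ℚ) * ((k : ℚ) + 1) := by
      exact_mod_cast congrArg (fun m : ℕ => (m : ℚ)) hc
    have hk1 : ((k : ℚ) + 1) ≠ 0 := by positivity
    rw [cQ, ← mul_assoc, hcq]
    field_simp
  rw [Finset.sum_congr rfl e1]
  have hsum : ∑ k ∈ range (n + 1),
        (((n + 1).choose (k + 1) : ℚ)) * ((2 ^ (k + 1) - 1) * bernoulli (k + 1)) * 4
      = ∑ j ∈ range (n + 2), (((n + 1).choose j : ℚ)) * ((2 ^ j - 1) * bernoulli j) * 4 := by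
    rw [Finset.sum_range_succ' (fun j => (((n + 1).choose j : ℚ)) * ((2 ^ j - 1) * bernoulli j) * 4)
      (n + 1)]
    norm_num
  rw [hsum]
  have split : ∑ j ∈ range (n + 2), (((n + 1).choose j : ℚ)) * ((2 ^ j - 1) * bernoulli j) * 4
      = 4 * (∑ j ∈ range (n + 2), (((n + 1).choose j : ℚ)) * 2 ^ j * bernoulli j)
        - 4 * (∑ j ∈ range (n + 2), (((n + 1).choose j : ℚ)) * bernoulli j) := by
    rw [Finset.mul_sum, Finset.mul_sum, ← Finset.sum_sub_distrib]
    exact Finset.sum_congr rfl fun j _ => by ring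
  rw [split, sum_two_pow_mul_bernoulli (n + 1), Finset.sum_range_succ, _root_.sum_bernoulli (n + 1),
    Nat.choose_self]
  rcases Nat.eq_zero_or_pos n with h | h
  · subst h; norm_num
  · rw [if_neg (by omega), if_neg (by omega)]
    push_cast
    ring

lemma neg_one_pow_sum_cQ (n : ℕ) :
    (-1 : ℚ) ^ n * ∑ k ∈ range (n + 1), (n.choose k : ℚ) * cQ k = cQ n := by
  have h := mul_sum_cQ n
  have hn1 : ((n : ℚ) + 1) ≠ 0 := by positivity
  rcases Nat.eq_zero_or_pos n with h0 | h0
  · subst h0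
    norm_num [cQ, bernoulli_one]
  rcases Nat.even_or_odd n with he | ho
  · have hc : cQ n = 0 := cQ_even_ne_zero he (by omega)
    have hb : bernoulli (n + 1) = 0 := by
      rw [bernoulli_eq_bernoulli'_of_ne_one (by omega)]
      exact bernoulli'_eq_zero_of_odd (Even.add_one he) (by omega)
    rw [if_neg (by omega), hb] at h
    have hz : ∑ k ∈ range (n + 1), (n.choose k : ℚ) * cQ k = 0 := by
      apply mul_left_cancel₀ hn1; rw [h]; ring
    rw [hz, hc, mul_zero]
  · have hpow : (-1 : ℚ) ^ n = -1 := Odd.neg_one_pow ho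
    rw [if_neg (by omega)] at h
    have hs : ∑ k ∈ range (n + 1), (n.choose k : ℚ) * cQ k = -cQ n := by
      apply mul_left_cancel₀ hn1
      rw [h, cQ]
      field_simp
      ring
    rw [hs, hpow]; ring

end

/-- The linear map `θ : ℝ[z] → ℝ` determined by
`θ(z^n) = 4 (2^{n+1} - 1) B_{n+1} / (n+1)`, with `bernoulli` Mathlib's
Bernoulli numbers (convention `B_1 = -1/2`). -/
noncomputable def theta (p : Polynomial ℝ) : ℝ :=
  p.sum fun n a => a * (4 * (2 ^ (n + 1) - 1) * ((bernoulli (n + 1) : ℚ) : ℝ) / (n + 1))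

/-- The θ-coefficient over ℝ. -/
noncomputable def cR (n : ℕ) : ℝ := ((cQ n : ℚ) : ℝ)

lemma cR_eq (n : ℕ) :
    cR n = 4 * (2 ^ (n + 1) - 1) * ((bernoulli (n + 1) : ℚ) : ℝ) / (n + 1) := by
  rw [cR, cQ]; push_cast; ring

lemma theta_def (p : Polynomial ℝ) : theta p = p.sum fun n a => a * cR n := by
  unfold theta
  simp_rw [cR_eq]

lemma theta_add (p q : Polynomial ℝ) : theta (p + q) = theta p + theta q := by
  simp only [theta_def]
  exact Polynomial.sum_add_index p q _ (fun i => zero_mul (cR i)) (fun a b c => add_mul b c _)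

lemma theta_smul (r : ℝ) (p : Polynomial ℝ) : theta (r • p) = r * theta p := by
  simp only [theta_def]
  rw [Polynomial.sum_smul_index p r _ (fun i => zero_mul (cR i)), Polynomial.sum_def,
    Polynomial.sum_def, Finset.mul_sum]
  exact Finset.sum_congr rfl fun k _ => by ring

noncomputable def Theta : Polynomial ℝ →ₗ[ℝ] ℝ where
  toFun := theta
  map_add' := theta_add
  map_smul' := theta_smul

lemma Theta_apply (p : Polynomial ℝ) : Theta p = theta p := rfl

lemma theta_monomial (n : ℕ) (a : ℝ) : theta (Polynomial.monomial n a) = a * cR n := by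
  rw [theta_def, Polynomial.sum_monomial_index a _ (zero_mul (cR n))]

lemma theta_X_pow (n : ℕ) : theta (Polynomial.X ^ n) = cR n := by
  rw [Polynomial.X_pow_eq_monomial, theta_monomial, one_mul]

local notation "PX" => Polynomial.X (R := ℝ)
local notation "PC" => Polynomial.C (R := ℝ)

lemma neg_one_sub_X_pow (N : ℕ) : ((-1 - PX : Polynomial ℝ)) ^ N
    = ∑ k ∈ range (N + 1), PC ((-1 : ℝ) ^ N * (N.choose k : ℝ)) * PX ^ k := by
  have h1 : (-1 - PX : Polynomial ℝ) = -(PX + 1) := by ring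
  rw [h1, neg_pow, add_pow, Finset.mul_sum]
  refine Finset.sum_congr rfl fun k hk => ?_
  rw [one_pow, mul_one, show ((N.choose k : Polynomial ℝ)) = PC ((N.choose k : ℝ)) by
      rw [Polynomial.C_eq_natCast],
    show ((-1 : Polynomial ℝ) ^ N) = PC ((-1 : ℝ) ^ N) by rw [map_pow, map_neg, map_one],
    map_mul]
  ring

lemma theta_neg_one_sub_pow (N : ℕ) : theta ((-1 - PX : Polynomial ℝ) ^ N) = cR N := by
  rw [neg_one_sub_X_pow, ← Theta_apply, map_sum]
  have e : ∀ k ∈ range (N + 1),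
      Theta (PC ((-1 : ℝ) ^ N * (N.choose k : ℝ)) * PX ^ k)
        = (-1 : ℝ) ^ N * ((N.choose k : ℝ) * cR k) := by
    intro k hk
    rw [← Polynomial.smul_eq_C_mul, Theta_apply, theta_smul, theta_X_pow]
    ring
  rw [Finset.sum_congr rfl e, ← Finset.mul_sum]
  have hc := congrArg (fun q : ℚ => (q : ℝ)) (neg_one_pow_sum_cQ N)
  push_cast at hc
  simpa [cR] using hc

lemma theta_comp_anti (p : Polynomial ℝ) : theta (p.comp (-1 - PX)) = theta p := by
  induction p using Polynomial.induction_on' with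
  | add p q hp hq => rw [Polynomial.add_comp, theta_add, hp, hq, theta_add]
  | monomial n a =>
    rw [Polynomial.monomial_comp, ← Polynomial.smul_eq_C_mul, theta_smul,
      theta_neg_one_sub_pow, theta_monomial]

lemma theta_anti (p : Polynomial ℝ) (h : p + p.comp (-1 - PX) = 0) : theta p = 0 := by
  have h2 : p.comp (-1 - PX) = -p := eq_neg_of_add_eq_zero_right h
  have h3 := theta_comp_anti p
  rw [h2, show (-p : Polynomial ℝ) = (-1 : ℝ) • p by simp, theta_smul] at h3
  linarith

lemma coeff_comp_neg_X (q : Polynomial ℝ) (n : ℕ) :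
    (q.comp (-PX)).coeff n = (-1) ^ n * q.coeff n := by
  induction q using Polynomial.induction_on' with
  | add p r hp hr => rw [Polynomial.add_comp, Polynomial.coeff_add, hp, hr,
      Polynomial.coeff_add]; ring
  | monomial m a =>
    rw [Polynomial.monomial_comp, neg_pow, ← mul_assoc, mul_comm (PC a), mul_assoc,
      show ((-1 : Polynomial ℝ) ^ m) = PC ((-1 : ℝ) ^ m) by rw [map_pow, map_neg, map_one],
      Polynomial.coeff_C_mul, ← Polynomial.smul_eq_C_mul]
    simp only [Polynomial.coeff_smul, Polynomial.coeff_X_pow, Polynomial.coeff_monomial,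
      smul_eq_mul]
    by_cases hmn : n = m
    · subst hmn; simp
    · simp [hmn, Ne.symm hmn]

lemma theta_even (q : Polynomial ℝ) (h : q.comp (-PX) = q) : theta q = -2 * q.eval 0 := by
  have hodd : ∀ n, Odd n → q.coeff n = 0 := by
    intro n hn
    have h1 := coeff_comp_neg_X q n
    rw [h, Odd.neg_one_pow hn] at h1
    linarith
  rw [theta_def, Polynomial.sum]
  rw [Finset.sum_eq_single 0 (fun b _ hb => ?_) (fun h0 => ?_)]
  · rw [show cR 0 = -2 by rw [cR, cQ]; norm_num [bernoulli_one],
      Polynomial.coeff_zero_eq_eval_zero]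
    ring
  · rcases Nat.even_or_odd b with he | ho
    · rw [cR, cQ_even_ne_zero he hb]; norm_num
    · rw [hodd b ho, zero_mul]
  · rw [Polynomial.notMem_support_iff.mp h0, zero_mul]

theorem theta_unique (φ : Polynomial ℝ →ₗ[ℝ] ℝ)
    (h1 : ∀ p : Polynomial ℝ, p + p.comp (-1 - Polynomial.X) = 0 → φ p = 0)
    (h2 : ∀ q : Polynomial ℝ, q.comp (-Polynomial.X) = q → φ q = -2 * q.eval 0) :
    ∀ p : Polynomial ℝ, φ p = theta p := by
  suffices H : ∀ n : ℕ, ∀ p : Polynomial ℝ, p.natDegree ≤ n → φ p = theta p by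
    intro p; exact H p.natDegree p le_rfl
  intro n
  induction n with
  | zero =>
    intro p hp
    have hc : p = Polynomial.C (p.coeff 0) := Polynomial.eq_C_of_natDegree_le_zero hp
    have heven : p.comp (-Polynomial.X) = p := by
      conv_lhs => rw [hc]
      rw [Polynomial.C_comp, ← hc]
    rw [h2 p heven, theta_even p heven]
  | succ n ih =>
    intro p hp
    rcases Nat.even_or_odd (n + 1) with he | ho
    · set c := p.coeff (n + 1) with hcdef
      have hXeven : ((Polynomial.X : Polynomial ℝ) ^ (n + 1)).comp (-Polynomial.X)
          = Polynomial.X ^ (n + 1) := by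
        rw [Polynomial.pow_comp, Polynomial.X_comp, he.neg_pow]
      set r := p - c • Polynomial.X ^ (n + 1) with hr
      have hrdeg : r.natDegree ≤ n := by
        rw [Polynomial.natDegree_le_iff_coeff_eq_zero]
        intro m hm
        rw [hr, Polynomial.coeff_sub, Polynomial.coeff_smul, Polynomial.coeff_X_pow]
        by_cases hmN : m = n + 1
        · subst hmN; simp [hcdef]
        · rw [Polynomial.coeff_eq_zero_of_natDegree_lt (hp.trans_lt (by omega)), if_neg hmN]
          simp
      have hXN : φ (Polynomial.X ^ (n + 1)) = theta (Polynomial.X ^ (n + 1)) := by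
        rw [h2 _ hXeven, theta_even _ hXeven]
      have hdec : p = r + c • Polynomial.X ^ (n + 1) := by rw [hr]; ring
      rw [hdec, map_add, map_smul, ih r hrdeg, theta_add, theta_smul, hXN, smul_eq_mul]
    · set c := p.coeff (n + 1) with hcdef
      set m := (Polynomial.X : Polynomial ℝ) ^ (n + 1) - (-1 - Polynomial.X) ^ (n + 1) with hm
      have hanti : m + m.comp (-1 - Polynomial.X) = 0 := by
        rw [hm]
        simp only [Polynomial.sub_comp, Polynomial.pow_comp, Polynomial.X_comp,
          Polynomial.neg_comp, Polynomial.one_comp]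
        ring_nf
      have hφm : φ m = 0 := h1 m hanti
      have hθm : theta m = 0 := theta_anti m hanti
      have hpow : ((-1 - Polynomial.X : Polynomial ℝ) ^ (n + 1)).coeff (n + 1) = -1 := by
        rw [neg_one_sub_X_pow, Polynomial.finset_sum_coeff]
        rw [Finset.sum_eq_single (n + 1) (fun b _ hb => ?_) (fun hmem => ?_)]
        · simp [Odd.neg_one_pow ho]
        · rw [Polynomial.coeff_C_mul, Polynomial.coeff_X_pow, if_neg (fun hx => hb hx.symm),
            mul_zero]
        · exact absurd (Finset.self_mem_range_succ (n + 1)) hmem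
      have hpowhi : ∀ j, n + 1 < j → ((-1 - Polynomial.X : Polynomial ℝ) ^ (n + 1)).coeff j = 0 := by
        intro j hj
        rw [neg_one_sub_X_pow, Polynomial.finset_sum_coeff]
        apply Finset.sum_eq_zero
        intro k hk
        rw [Polynomial.coeff_C_mul, Polynomial.coeff_X_pow,
          if_neg (by rw [mem_range] at hk; omega), mul_zero]
      set r := p - (c / 2) • m with hr
      have hrdeg : r.natDegree ≤ n := by
        rw [Polynomial.natDegree_le_iff_coeff_eq_zero]
        intro j hj
        rw [hr, Polynomial.coeff_sub, Polynomial.coeff_smul, hm, Polynomial.coeff_sub,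
          Polynomial.coeff_X_pow]
        by_cases hmN : j = n + 1
        · subst hmN
          rw [if_pos rfl, hpow, smul_eq_mul, ← hcdef]
          ring
        · rw [Polynomial.coeff_eq_zero_of_natDegree_lt (hp.trans_lt (by omega)), if_neg hmN,
            hpowhi j (by omega), smul_eq_mul]
          ring
      have hdec : p = r + (c / 2) • m := by rw [hr]; ring
      rw [hdec, map_add, map_smul, ih r hrdeg, theta_add, theta_smul, hφm, hθm, smul_eq_mul]
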